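/- For every k ≥ 1 and every n ≥ 2k + 3, the full automorphism group of the circulant graph Circ(n, {1, 2, …, k}) is isomorphic to the dihedral group of order 2n. -/

import Mathlib

namespace NutPaper

open Matrix

variable {V : Type*}

open scoped Classical in
/-- The real adjacency matrix of a simple graph. -/
noncomputable def adjMat (G : SimpleGraph V) : Matrix V V ℝ :=
  Matrix.of fun u v => if G.Adj u v then (1 : ℝ) else 0

/-- A nut graph: the adjacency matrix has nullity exactly one, and every
nonzero kernel vector has all entries nonzero. -/
def IsNutGraph [Fintype V] (G : SimpleGraph V) : Prop :=
  Module.finrank ℝ (LinearMap.ker (Matrix.mulVecLin (adjMat G))) = 1 ∧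
  ∀ x : V → ℝ, adjMat G *ᵥ x = 0 → x ≠ 0 → ∀ v, x v ≠ 0

/-- The orbit of a vertex under the full automorphism group. -/
def vertexOrbit (G : SimpleGraph V) (v : V) : Set V :=
  {u | ∃ α : G ≃g G, α v = u}

/-- The set of vertex orbits. -/
def vertexOrbits (G : SimpleGraph V) : Set (Set V) :=
  Set.range (vertexOrbit G)

/-- The number of vertex orbits. -/
noncomputable def numVertexOrbits (G : SimpleGraph V) : ℕ :=
  Nat.card (vertexOrbits G)

/-- The orbit of an edge under the full automorphism group. -/
def edgeOrbit (G : SimpleGraph V) (e : Sym2 V) : Set (Sym2 V) :=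
  {f | ∃ α : G ≃g G, Sym2.map (⇑α) e = f}

/-- The set of edge orbits. -/
def edgeOrbits (G : SimpleGraph V) : Set (Set (Sym2 V)) :=
  edgeOrbit G '' G.edgeSet

/-- The number of edge orbits. -/
noncomputable def numEdgeOrbits (G : SimpleGraph V) : ℕ :=
  Nat.card (edgeOrbits G)


/-- The full automorphism group of a simple graph `G`, as a subgroup of the
permutation group of its vertex set. -/
def autGroup (G : SimpleGraph V) : Subgroup (Equiv.Perm V) where
  carrier := {π | ∀ u v : V, G.Adj (π u) (π v) ↔ G.Adj u v}
  one_mem' := by intro u v; simp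
  mul_mem' := by
    intro a b ha hb u v
    simpa [Equiv.Perm.mul_apply] using (ha (b u) (b v)).trans (hb u v)
  inv_mem' := by
    intro a ha u v
    simpa using (ha (a⁻¹ u) (a⁻¹ v)).symm

/-! In `Circ(n, {1, …, k})` the adjacent pairs `u, u ± 1` are exactly the adjacent pairs with
`2k - 2` common neighbours: a pair at distance `2 ≤ e ≤ k` has at most `2k - 3` of them once
`n ≥ 2k + 3`. So every automorphism maps the Hamiltonian cycle `0, 1, …, n - 1` onto itself, and is
therefore a rotation or a reflection of `ℤ_n`. Conversely the dihedral group acts on every circulant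
graph over `ℤ_n`, faithfully since `n ≥ 3`. -/

theorem ncard_commonNeighbors_apply_of_mem_autGroup {G : SimpleGraph V} {π : Equiv.Perm V}
    (hπ : π ∈ autGroup G) (u v : V) :
    (G.commonNeighbors (π u) (π v)).ncard = (G.commonNeighbors u v).ncard := by
  have himage : G.commonNeighbors (π u) (π v) = π '' G.commonNeighbors u v := by
    ext w
    obtain ⟨w, rfl⟩ := π.surjective w
    simp only [SimpleGraph.mem_commonNeighbors, π.injective.mem_set_image, hπ _ _]
  rw [himage, Set.ncard_image_of_injective _ π.injective]

end NutPaper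

theorem ZMod.two_ne_zero_of_two_lt {n : ℕ} (hn : 2 < n) : (2 : ZMod n) ≠ 0 := by
  rw [← Nat.cast_ofNat, ne_eq, ZMod.natCast_eq_zero_iff]
  exact Nat.not_dvd_of_pos_of_lt two_pos hn

theorem ZMod.val_sub_eq_mod {n : ℕ} [NeZero n] (a b : ZMod n) :
    (a - b).val = (a.val + (n - b.val)) % n := by
  have hneg : -b = ((n - b.val : ℕ) : ZMod n) := by
    rw [Nat.cast_sub b.val_le, ZMod.natCast_self, ZMod.natCast_zmod_val, zero_sub]
  rw [sub_eq_add_neg, hneg, ZMod.val_add, ZMod.val_natCast, Nat.add_mod_mod]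

theorem ZMod.eq_add_or_eq_sub_of_map_add_one {n : ℕ} [NeZero n] (h2 : (2 : ZMod n) ≠ 0)
    {f : ZMod n → ZMod n} (hf : Function.Injective f)
    (hstep : ∀ u, f (u + 1) = f u + 1 ∨ f u = f (u + 1) + 1) :
    (∀ x, f x = f 0 + x) ∨ (∀ x, f x = f 0 - x) := by
  set ε := f 1 - f 0 with hε
  -- two steps in opposite directions would give `f (u + 2) = f u`
  have hpropagate : ∀ u, f (u + 1 + 1) - f (u + 1) = f (u + 1) - f u := by
    intro u
    have hback : f (u + 1 + 1) ≠ f u := fun h => h2 (by linear_combination hf h)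
    rcases hstep u with h | h <;> rcases hstep (u + 1) with h' | h'
    · linear_combination h' - h
    · exact absurd (by linear_combination h - h') hback
    · exact absurd (by linear_combination h' - h) hback
    · linear_combination h - h'
  have hconst : ∀ m : ℕ, f (m + 1) - f m = ε := by
    intro m
    induction m with
    | zero => simp [hε]
    | succ m ih => push_cast; rw [hpropagate, ih]
  have hlinear : ∀ m : ℕ, f m = f 0 + m * ε := by
    intro m
    induction m with
    | zero => simp
    | succ m ih => push_cast; linear_combination hconst m + ih
  have hvalue : ∀ x, f x = f 0 + x * ε := fun x => by
    simpa only [ZMod.natCast_zmod_val] using hlinear x.val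
  rcases hstep 0 with h | h <;> rw [zero_add] at h
  · exact Or.inl fun x => by rw [hvalue, hε, h]; ring
  · exact Or.inr fun x => by rw [hvalue, hε]; linear_combination (-x) * h

theorem Nat.add_sub_mod_eq_ite {n e m : ℕ} (he : e ≤ n) (hm : m < n) :
    (m + (n - e)) % n = if e ≤ m then m - e else m + n - e := by
  split_ifs with h
  · rw [show m + (n - e) = m - e + n by omega, Nat.add_mod_right, Nat.mod_eq_of_lt (by omega)]
  · rw [Nat.mod_eq_of_lt (by omega)]
    omega

theorem SimpleGraph.circulantGraph_adj_sub_left {G : Type*} [AddCommGroup G] (s : Set G)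
    (c u v : G) : (circulantGraph s).Adj (c - u) (c - v) ↔ (circulantGraph s).Adj u v := by
  simp only [SimpleGraph.circulantGraph_adj, sub_sub_sub_cancel_left, sub_right_inj, or_comm]

namespace DihedralGroup

variable {n : ℕ}

/-- Rotations act by `x ↦ x - i`, not `x ↦ x + i`, to match `r i * sr j = sr (j - i)`. -/
def toPerm : DihedralGroup n →* Equiv.Perm (ZMod n) where
  toFun
    | r i => Equiv.subRight i
    | sr i => Equiv.subLeft i
  map_one' := Equiv.ext sub_zero
  map_mul' := by
    rintro (i | i) (j | j) <;> ext x <;> simp <;> ring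

@[simp]
theorem toPerm_r_apply (i x : ZMod n) : toPerm (r i) x = x - i :=
  rfl

@[simp]
theorem toPerm_sr_apply (i x : ZMod n) : toPerm (sr i) x = i - x :=
  rfl

theorem toPerm_injective (h2 : (2 : ZMod n) ≠ 0) : Function.Injective (toPerm (n := n)) := by
  rw [injective_iff_map_eq_one]
  rintro (i | i) h
  · have h0 := congrArg (· 0) h
    simp only [toPerm_r_apply, zero_sub, Equiv.Perm.coe_one, id_eq, neg_eq_zero] at h0
    rw [h0, r_zero]
  · have h0 := congrArg (· 0) h
    have h1 := congrArg (· 1) h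
    simp only [toPerm_sr_apply, sub_zero, Equiv.Perm.coe_one, id_eq] at h0 h1
    exact absurd (by linear_combination h0 - h1) h2

end DihedralGroup

namespace NutPaper

theorem toPerm_mem_autGroup_circulantGraph {n : ℕ} (s : Set (ZMod n)) (g : DihedralGroup n) :
    DihedralGroup.toPerm g ∈ autGroup (SimpleGraph.circulantGraph s) := by
  intro u v
  cases g with
  | r i =>
    simp only [DihedralGroup.toPerm_r_apply, sub_eq_add_neg,
      SimpleGraph.circulantGraph_adj_translate]
  | sr i => exact SimpleGraph.circulantGraph_adj_sub_left s i u v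

open Finset

/-- `Circ(n, {1, …, k})`, the `k`-th power of the `n`-cycle. -/
abbrev cyclePowerGraph (n k : ℕ) : SimpleGraph (ZMod n) :=
  SimpleGraph.circulantGraph ((fun j : ℕ => (j : ZMod n)) '' Set.Icc 1 k)

def IsCycleJump (n k m : ℕ) : Prop :=
  1 ≤ m ∧ m ≤ k ∨ n - k ≤ m

instance (n k m : ℕ) : Decidable (IsCycleJump n k m) := by
  unfold IsCycleJump; infer_instance

section CyclePowerGraph

variable {n k : ℕ}

theorem card_filter_isCycleJump_one (hn : 2 * k + 2 ≤ n) :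
    #{m ∈ range n | IsCycleJump n k m ∧ IsCycleJump n k ((m + (n - 1)) % n)} = 2 * k - 2 := by
  have hset : {m ∈ range n | IsCycleJump n k m ∧ IsCycleJump n k ((m + (n - 1)) % n)}
      = Icc 2 k ∪ Icc (n - k + 1) (n - 1) := by
    ext m
    simp only [mem_filter, mem_range, mem_union, mem_Icc]
    constructor
    · rintro ⟨hm, h1, h2⟩
      rw [Nat.add_sub_mod_eq_ite (by omega) hm] at h2
      unfold IsCycleJump at h1 h2
      split_ifs at h2 <;> omega
    · intro h
      have hm : m < n := by omega
      refine ⟨hm, by unfold IsCycleJump; omega, ?_⟩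
      rw [Nat.add_sub_mod_eq_ite (by omega) hm]
      unfold IsCycleJump
      split_ifs <;> omega
  rw [hset, card_union_of_disjoint, Nat.card_Icc, Nat.card_Icc]
  · omega
  · rw [disjoint_left]
    intro a ha hb
    simp only [mem_Icc] at ha hb
    omega

/-- Without wrap-around there are `2k - 1 - e` common neighbours; wrap-around adds at most
`2k + e + 1 - n ≤ e - 2`, which is where `n ≥ 2k + 3` enters. -/
theorem card_filter_isCycleJump_le {e : ℕ} (hn : 2 * k + 3 ≤ n) (he : 2 ≤ e) (hek : e ≤ k) :
    #{m ∈ range n | IsCycleJump n k m ∧ IsCycleJump n k ((m + (n - e)) % n)} ≤ 2 * k - 3 := by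
  have hsub : {m ∈ range n | IsCycleJump n k m ∧ IsCycleJump n k ((m + (n - e)) % n)}
      ⊆ (Icc 1 (e - 1) ∪ Icc (e + 1) k) ∪ (Icc (n - k + e) (n - 1) ∪ Icc (n - k) (k + e)) := by
    intro m hm
    simp only [mem_filter, mem_range] at hm
    obtain ⟨hmn, h1, h2⟩ := hm
    rw [Nat.add_sub_mod_eq_ite (by omega) hmn] at h2
    simp only [mem_union, mem_Icc]
    unfold IsCycleJump at h1 h2
    split_ifs at h2 <;> omega
  calc _ ≤ _ := card_le_card hsub
    _ ≤ (#(Icc 1 (e - 1)) + #(Icc (e + 1) k)) +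
        (#(Icc (n - k + e) (n - 1)) + #(Icc (n - k) (k + e))) :=
      (card_union_le _ _).trans (add_le_add (card_union_le _ _) (card_union_le _ _))
    _ ≤ 2 * k - 3 := by simp only [Nat.card_Icc]; omega

theorem mem_image_natCast_Icc_iff (hkn : k < n) {x : ZMod n} :
    x ∈ (fun j : ℕ => (j : ZMod n)) '' Set.Icc 1 k ↔ 1 ≤ x.val ∧ x.val ≤ k := by
  have : NeZero n := ⟨by omega⟩
  constructor
  · rintro ⟨j, ⟨h1, h2⟩, rfl⟩
    rw [ZMod.val_cast_of_lt (by omega)]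
    exact ⟨h1, h2⟩
  · rintro ⟨h1, h2⟩
    exact ⟨x.val, ⟨h1, h2⟩, ZMod.natCast_zmod_val x⟩

theorem cyclePowerGraph_adj_iff (hkn : k < n) {u v : ZMod n} :
    (cyclePowerGraph n k).Adj u v ↔ IsCycleJump n k (v - u).val := by
  have : NeZero n := ⟨by omega⟩
  have hlt := ZMod.val_lt (v - u)
  rw [SimpleGraph.circulantGraph_adj, mem_image_natCast_Icc_iff hkn,
    mem_image_natCast_Icc_iff hkn, ← neg_sub v u, ZMod.neg_val, IsCycleJump]
  by_cases h : v - u = 0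
  · simp only [sub_eq_zero.mp h, sub_self, ZMod.val_zero, not_true_eq_false, false_and,
      false_iff]
    omega
  · have hne : u ≠ v := fun huv => h (by rw [huv, sub_self])
    have : (v - u).val ≠ 0 := by rwa [ne_eq, ZMod.val_eq_zero]
    simp only [h, if_false, hne, not_false_eq_true, true_and]
    omega

theorem ncard_commonNeighbors_cyclePowerGraph (hkn : k < n) (u v : ZMod n) :
    ((cyclePowerGraph n k).commonNeighbors u v).ncard =
      #{m ∈ range n | IsCycleJump n k m ∧ IsCycleJump n k ((m + (n - (v - u).val)) % n)} := by
  have : NeZero n := ⟨by omega⟩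
  have hdiff : ∀ w, (w - v).val = ((w - u).val + (n - (v - u).val)) % n := fun w => by
    rw [← ZMod.val_sub_eq_mod, sub_sub_sub_cancel_right]
  rw [← Set.ncard_coe_finset]
  refine Set.ncard_congr (fun w _ => (w - u).val) ?_ ?_ ?_
  · intro w hw
    rw [SimpleGraph.mem_commonNeighbors, cyclePowerGraph_adj_iff hkn,
      cyclePowerGraph_adj_iff hkn, hdiff] at hw
    simpa using ⟨ZMod.val_lt _, hw⟩
  · intro w w' _ _ h
    simpa using ZMod.val_injective n h
  · intro m hm
    simp only [coe_filter, mem_range, Set.mem_ofPred_eq] at hm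
    have hval : (u + m - u).val = m := by rw [add_sub_cancel_left, ZMod.val_cast_of_lt hm.1]
    refine ⟨u + m, ?_, hval⟩
    rw [SimpleGraph.mem_commonNeighbors, cyclePowerGraph_adj_iff hkn,
      cyclePowerGraph_adj_iff hkn, hdiff, hval]
    exact hm.2

theorem ncard_commonNeighbors_cyclePowerGraph_eq_iff (hn : 2 * k + 3 ≤ n)
    {u v : ZMod n} (h1 : 1 ≤ (v - u).val) (h2 : (v - u).val ≤ k) :
    ((cyclePowerGraph n k).commonNeighbors u v).ncard = 2 * k - 2 ↔ v = u + 1 := by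
  have : NeZero n := ⟨by omega⟩
  have hval_one : (1 : ZMod n).val = 1 := ZMod.val_one'' (by omega)
  rw [ncard_commonNeighbors_cyclePowerGraph (by omega), ← sub_eq_iff_eq_add',
    ← ZMod.val_injective n |>.eq_iff, hval_one]
  rcases Nat.lt_or_ge (v - u).val 2 with hlt | hge
  · rw [show (v - u).val = 1 by omega, card_filter_isCycleJump_one (by omega)]
    simp
  · have := card_filter_isCycleJump_le hn hge h2
    omega

theorem cyclePowerGraph_adj_and_ncard_commonNeighbors_iff (hk : 1 ≤ k) (hn : 2 * k + 3 ≤ n)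
    {u v : ZMod n} :
    (cyclePowerGraph n k).Adj u v ∧
        ((cyclePowerGraph n k).commonNeighbors u v).ncard = 2 * k - 2 ↔
      v = u + 1 ∨ u = v + 1 := by
  have : NeZero n := ⟨by omega⟩
  have hval_one : (1 : ZMod n).val = 1 := ZMod.val_one'' (by omega)
  have hsucc : ∀ a b : ZMod n, b = a + 1 →
      (cyclePowerGraph n k).Adj a b ∧
        ((cyclePowerGraph n k).commonNeighbors a b).ncard = 2 * k - 2 := by
    rintro a b rfl
    have hval : (a + 1 - a).val = 1 := by rw [add_sub_cancel_left, hval_one]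
    refine ⟨?_, ?_⟩
    · rw [cyclePowerGraph_adj_iff (by omega), hval, IsCycleJump]
      omega
    · rw [ncard_commonNeighbors_cyclePowerGraph_eq_iff hn (by omega) (by omega)]
  constructor
  · rintro ⟨hadj, hcard⟩
    rw [cyclePowerGraph_adj_iff (by omega), IsCycleJump] at hadj
    rcases hadj with hjump | hjump
    · exact Or.inl ((ncard_commonNeighbors_cyclePowerGraph_eq_iff hn hjump.1 hjump.2).mp hcard)
    · have hne : v - u ≠ 0 := fun h => by rw [h, ZMod.val_zero] at hjump; omega
      have hval : (u - v).val = n - (v - u).val := by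
        rw [← neg_sub, ZMod.neg_val, if_neg hne]
      have hlt := ZMod.val_lt (v - u)
      rw [SimpleGraph.commonNeighbors_symm] at hcard
      exact Or.inr ((ncard_commonNeighbors_cyclePowerGraph_eq_iff hn (by omega) (by omega)).mp
        hcard)
  · rintro (h | h)
    · exact hsucc u v h
    · obtain ⟨hadj, hcard⟩ := hsucc v u h
      exact ⟨hadj.symm, by rwa [SimpleGraph.commonNeighbors_symm]⟩

theorem map_add_one_of_mem_autGroup_cyclePowerGraph (hk : 1 ≤ k) (hn : 2 * k + 3 ≤ n)
    {π : Equiv.Perm (ZMod n)} (hπ : π ∈ autGroup (cyclePowerGraph n k)) (u : ZMod n) :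
    π (u + 1) = π u + 1 ∨ π u = π (u + 1) + 1 := by
  rw [← cyclePowerGraph_adj_and_ncard_commonNeighbors_iff hk hn,
    ncard_commonNeighbors_apply_of_mem_autGroup hπ, hπ,
    cyclePowerGraph_adj_and_ncard_commonNeighbors_iff hk hn]
  exact Or.inl rfl

theorem autGroup_cyclePowerGraph_eq_range (hk : 1 ≤ k) (hn : 2 * k + 3 ≤ n) :
    autGroup (cyclePowerGraph n k) = DihedralGroup.toPerm.range := by
  have : NeZero n := ⟨by omega⟩
  refine le_antisymm (fun π hπ => ?_) ?_
  · rcases ZMod.eq_add_or_eq_sub_of_map_add_one (ZMod.two_ne_zero_of_two_lt (by omega))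
      π.injective (map_add_one_of_mem_autGroup_cyclePowerGraph hk hn hπ) with hrot | hrefl
    · exact ⟨DihedralGroup.r (-π 0), Equiv.ext fun x => by simp [hrot x, add_comm]⟩
    · exact ⟨DihedralGroup.sr (π 0), Equiv.ext fun x => by simp [hrefl x]⟩
  · rintro _ ⟨g, rfl⟩
    exact toPerm_mem_autGroup_circulantGraph _ g

end CyclePowerGraph

/-- For every `k ≥ 1` and every `n ≥ 2k + 3`, the full
automorphism group of the circulant graph `Circ(n, {1, …, k})` is isomorphic
to the dihedral group of order `2n`. -/
theorem autGroup_circulant_eq_dihedral (k n : ℕ) (hk : 1 ≤ k)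
    (hn : 2 * k + 3 ≤ n) :
    Nonempty
      (autGroup (SimpleGraph.circulantGraph
          ((fun j : ℕ => (j : ZMod n)) '' Set.Icc 1 k)) ≃* DihedralGroup n) :=
  ⟨(MulEquiv.subgroupCongr (autGroup_cyclePowerGraph_eq_range hk hn)).trans
    (MonoidHom.ofInjective (DihedralGroup.toPerm_injective
      (ZMod.two_ne_zero_of_two_lt (by omega)))).symm⟩

end NutPaper
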